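/- For every integer m ≥ 1 and every real x with 0 < x ≤ 1, one has the chain of strict inequalities 0 < x m/(2m+2) < J_{m+1}(m x)/J_m(m x) < x m/(m+2) < 1. -/

import Mathlib

open MeasureTheory Filter Set

/-- The Bessel function of the first kind of order `ν`:
`J_ν(x) = ∑ₖ (-1)^k / (k! Γ(ν+k+1)) (x/2)^(2k+ν)`. -/
noncomputable def besselJ (ν : ℝ) (x : ℝ) : ℝ :=
  ∑' k : ℕ, ((-1 : ℝ) ^ k / ((k.factorial : ℝ) * Real.Gamma (ν + (k : ℝ) + 1))) *
    (x / 2) ^ (2 * (k : ℝ) + ν)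

/-- The derivative `J_ν'` of the Bessel function. -/
noncomputable def besselJDeriv (ν : ℝ) (x : ℝ) : ℝ := deriv (besselJ ν) x

/-- `besselJZero ν s` is the `s`-th positive zero of `J_ν` (for `s ≥ 1`),
listed in increasing order. -/
noncomputable def besselJZero (ν : ℝ) : ℕ → ℝ
  | 0 => 0
  | s + 1 => sInf {x : ℝ | besselJZero ν s < x ∧ besselJ ν x = 0}

/-- `besselJPrimeZero ν s` is the `s`-th positive zero of `J_ν'` (for `s ≥ 1`),
listed in increasing order. -/
noncomputable def besselJPrimeZero (ν : ℝ) : ℕ → ℝ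
  | 0 => 0
  | s + 1 => sInf {x : ℝ | besselJPrimeZero ν s < x ∧ besselJDeriv ν x = 0}

/-!
Write `J_n(t) = (t/2)^n S_n(t²/4)` with the entire series
`S_n(u) = besselSeries n u = ∑ (-1)^k u^k / (k! (n+k)!)`.
Then `S_n' = -S_{n+1}`, `S_n = (n+1) S_{n+1} - u S_{n+2}`, and the ratio `J_{m+1}/J_m` at `t` is
`(t/2) S_{m+1}/S_m` at `u = t²/4 ≤ m²/4`; by the recurrence the two bounds amount to the positivity
of `u S_{m+2}` and of `m S_{m+1} - 2u S_{m+2}`.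

Positivity comes from a Sturm-type argument: `(u^p f)' = u^(p-1) (p f + u f')`, so for `p > 0` the
function `u^p f` increases from `0` as long as `p f + u f' > 0`. For `f = a S_n - 2u S_{n+1}` and
`p = n - a/2` the recurrence gives `p f + u f' = (a(2n - a)/2 - 2u) S_n`, and for `f = S_n`,
`p = n/2` it gives `p f + u f' = (n S_n - 2u S_{n+1})/2`. Hence `S_n > 0` up to `u = n²/4`: at a
first zero of `S_n` the first case makes `n S_n - 2u S_{n+1}` positive, and then the second case
makes `S_n` itself positive there.
-/

open scoped Nat

noncomputable def besselCoeff (n k : ℕ) : ℝ := (-1) ^ k / (k ! * (n + k)!)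

noncomputable def besselSeries (n : ℕ) (u : ℝ) : ℝ := ∑' k, besselCoeff n k * u ^ k

lemma abs_besselCoeff_le (n k : ℕ) : |besselCoeff n k| ≤ 1 / k ! := by
  have hk : (0 : ℝ) < k ! := by positivity
  have hnk : (1 : ℝ) ≤ (n + k)! := Nat.one_le_cast.mpr (Nat.factorial_pos _)
  rw [besselCoeff, abs_div, abs_pow, abs_neg, abs_one, one_pow, abs_of_pos (by positivity)]
  gcongr
  exact le_mul_of_one_le_right hk.le hnk

lemma besselCoeff_succ_mul (n k : ℕ) :
    besselCoeff n (k + 1) * (k + 1) = -besselCoeff (n + 1) k := by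
  rw [besselCoeff, besselCoeff, show n + (k + 1) = n + 1 + k by omega, Nat.factorial_succ]
  push_cast
  field_simp
  ring

lemma besselCoeff_recurrence (n k : ℕ) :
    (n + 1) * besselCoeff (n + 1) (k + 1) - besselCoeff n (k + 1) = besselCoeff (n + 2) k := by
  rw [besselCoeff, besselCoeff, besselCoeff, show n + 1 + (k + 1) = n + k + 1 + 1 by omega,
    show n + (k + 1) = n + k + 1 by omega, show n + 2 + k = n + k + 1 + 1 by omega,
    Nat.factorial_succ (n + k + 1), Nat.factorial_succ k]
  push_cast
  field_simp
  ring

lemma summable_besselSeries (n : ℕ) (u : ℝ) : Summable fun k => besselCoeff n k * u ^ k := by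
  refine (Real.summable_pow_div_factorial |u|).of_norm_bounded fun k => ?_
  rw [norm_mul, norm_pow, Real.norm_eq_abs, Real.norm_eq_abs, div_eq_inv_mul, ← one_div]
  exact mul_le_mul_of_nonneg_right (abs_besselCoeff_le n k) (by positivity)

lemma summable_mul_pow_pred_div_factorial (R : ℝ) :
    Summable fun k : ℕ => k * R ^ (k - 1) / k ! := by
  refine (summable_nat_add_iff 1).mp ?_
  refine (Real.summable_pow_div_factorial R).congr fun k => ?_
  rw [Nat.add_sub_cancel, Nat.factorial_succ]
  push_cast
  field_simp

lemma norm_besselCoeff_mul_deriv_pow_le (n k : ℕ) {y R : ℝ} (hy : |y| ≤ R) :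
    ‖besselCoeff n k * (k * y ^ (k - 1))‖ ≤ k * R ^ (k - 1) / k ! := by
  rw [norm_mul, norm_mul, norm_pow, Real.norm_eq_abs, Real.norm_eq_abs, Nat.abs_cast,
    mul_div_assoc, mul_left_comm, div_eq_inv_mul, ← one_div]
  have : ‖y‖ ^ (k - 1) ≤ R ^ (k - 1) := by gcongr; exact hy
  gcongr
  exact abs_besselCoeff_le n k

lemma hasDerivAt_besselSeries (n : ℕ) (u : ℝ) :
    HasDerivAt (besselSeries n) (-besselSeries (n + 1) u) u := by
  set R := |u| + 1
  have hu : u ∈ Ioo (-R) R := abs_lt.mp (lt_add_one _)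
  have key := hasDerivAt_tsum_of_isPreconnected (g := fun k y => besselCoeff n k * y ^ k)
    (g' := fun k y => besselCoeff n k * (k * y ^ (k - 1)))
    (summable_mul_pow_pred_div_factorial R) isOpen_Ioo (convex_Ioo (-R) R).isPreconnected
    (fun k y _ => (hasDerivAt_pow k y).const_mul _)
    (fun k y hy => norm_besselCoeff_mul_deriv_pow_le n k (abs_le.mpr ⟨hy.1.le, hy.2.le⟩)) hu
    (summable_besselSeries n u) hu
  refine key.congr_deriv ?_
  have hsum : Summable fun k => besselCoeff n k * (k * u ^ (k - 1)) :=
    (summable_mul_pow_pred_div_factorial |u|).of_norm_bounded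
      fun k => norm_besselCoeff_mul_deriv_pow_le n k le_rfl
  rw [hsum.tsum_eq_zero_add, besselSeries, ← tsum_neg]
  simp only [CharP.cast_eq_zero, zero_mul, mul_zero, zero_add, Nat.add_sub_cancel]
  congr 1 with k
  rw [neg_mul_eq_neg_mul, ← besselCoeff_succ_mul]
  push_cast
  ring

@[fun_prop]
lemma continuous_besselSeries (n : ℕ) : Continuous (besselSeries n) :=
  continuous_iff_continuousAt.mpr fun u => (hasDerivAt_besselSeries n u).continuousAt

lemma besselSeries_apply_zero (n : ℕ) : besselSeries n 0 = 1 / n ! := by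
  rw [besselSeries, tsum_eq_single 0 fun k hk => by rw [zero_pow hk, mul_zero]]
  simp [besselCoeff]

lemma besselSeries_recurrence (n : ℕ) (u : ℝ) :
    besselSeries n u = (n + 1) * besselSeries (n + 1) u - u * besselSeries (n + 2) u := by
  have hsum : Summable fun k =>
      (n + 1) * (besselCoeff (n + 1) k * u ^ k) - besselCoeff n k * u ^ k :=
    ((summable_besselSeries (n + 1) u).mul_left _).sub (summable_besselSeries n u)
  have hzero : (n + 1) * besselCoeff (n + 1) 0 - besselCoeff n 0 = 0 := by
    simp only [besselCoeff, Nat.factorial_succ, add_zero, pow_zero, Nat.factorial_zero]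
    push_cast
    field_simp
    ring
  suffices (n + 1) * besselSeries (n + 1) u - besselSeries n u = u * besselSeries (n + 2) u by
    linarith
  rw [besselSeries, besselSeries, besselSeries, ← tsum_mul_left,
    ← (summable_besselSeries (n + 1) u).mul_left _ |>.tsum_sub (summable_besselSeries n u),
    hsum.tsum_eq_zero_add, ← tsum_mul_left, pow_zero, mul_one, mul_one, hzero, zero_add]
  congr 1 with k
  rw [← besselCoeff_recurrence, pow_succ]
  ring

lemma besselJ_natCast (n : ℕ) (t : ℝ) :
    besselJ n t = (t / 2) ^ n * besselSeries n (t ^ 2 / 4) := by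
  rw [besselJ, besselSeries, ← tsum_mul_left]
  congr 1 with k
  rw [show (n : ℝ) + k + 1 = (n + k : ℕ) + 1 by push_cast; ring, Real.Gamma_nat_eq_factorial,
    show 2 * (k : ℝ) + n = (2 * k + n : ℕ) by push_cast; ring, Real.rpow_natCast, besselCoeff,
    pow_add, pow_mul]
  ring

lemma exists_first_nonpos {f : ℝ → ℝ} {a b : ℝ} (hab : a ≤ b) (hf : ContinuousOn f (Icc a b))
    (ha : 0 < f a) (hb : f b ≤ 0) : ∃ c ∈ Ioc a b, f c ≤ 0 ∧ ∀ v ∈ Ico a c, 0 < f v := by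
  have hS : IsCompact (Icc a b ∩ f ⁻¹' Iic 0) := isCompact_Icc.of_isClosed_subset
    (hf.preimage_isClosed_of_isClosed isClosed_Icc isClosed_Iic) inter_subset_left
  obtain ⟨c, ⟨⟨hac, hcb⟩, hc⟩, hleast⟩ := hS.exists_isLeast ⟨b, ⟨hab, le_rfl⟩, hb⟩
  refine ⟨c, ⟨hac.lt_of_ne ?_, hcb⟩, hc, fun v hv => ?_⟩
  · rintro rfl
    exact (not_le.mpr ha) hc
  · by_contra! hfv
    exact (not_le.mpr hv.2) (hleast ⟨⟨hv.1, hv.2.le.trans hcb⟩, hfv⟩)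

lemma pos_of_rpow_mul_deriv_pos {f f' : ℝ → ℝ} {p b u : ℝ} (hp : 0 < p)
    (hf : ContinuousOn f (Icc 0 b)) (hf' : ∀ v ∈ Ioo 0 b, HasDerivAt f (f' v) v)
    (hpos : ∀ v ∈ Ioo 0 b, 0 < p * f v + v * f' v) (hu : u ∈ Ioc 0 b) : 0 < f u := by
  have hmono : StrictMonoOn (fun w => w ^ p * f w) (Icc 0 b) := by
    refine strictMonoOn_of_deriv_pos (convex_Icc 0 b)
      ((continuousOn_id.rpow_const fun _ _ => Or.inr hp.le).mul hf) fun v hv => ?_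
    rw [interior_Icc] at hv
    have hv0 : v ≠ 0 := hv.1.ne'
    have hd : HasDerivAt (fun w => w ^ p * f w) _ v :=
      (Real.hasDerivAt_rpow_const (Or.inl hv0)).mul (hf' v hv)
    rw [hd.deriv, show v ^ p = v ^ (p - 1) * v by rw [← Real.rpow_add_one hv0, sub_add_cancel]]
    exact (mul_pos (Real.rpow_pos_of_pos hv.1 (p - 1)) (hpos v hv)).trans_eq (by ring)
  have h := hmono ⟨le_rfl, hu.1.le.trans hu.2⟩ ⟨hu.1.le, hu.2⟩ hu.1
  simp only [Real.zero_rpow hp.ne', zero_mul] at h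
  exact pos_of_mul_pos_right h (Real.rpow_nonneg hu.1.le p)

lemma besselSeries_sub_pos {n : ℕ} {a b u : ℝ} (hb : 4 * b ≤ a * (2 * n - a))
    (hS : ∀ v ∈ Ioo 0 b, 0 < besselSeries n v) (hu : u ∈ Ioc 0 b) :
    0 < a * besselSeries n u - 2 * u * besselSeries (n + 1) u := by
  have hp : 0 < n - a / 2 := by nlinarith [hu.1, hu.2, Nat.cast_nonneg (α := ℝ) n]
  refine pos_of_rpow_mul_deriv_pos
    (f := fun w => a * besselSeries n w - 2 * w * besselSeries (n + 1) w)
    (f' := fun v => -(a + 2) * besselSeries (n + 1) v + 2 * v * besselSeries (n + 2) v) hp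
    (by fun_prop) (fun v _ => ?_) (fun v hv => ?_) hu
  · exact (((hasDerivAt_besselSeries n v).const_mul a).sub
      (((hasDerivAt_id v).const_mul 2).mul (hasDerivAt_besselSeries (n + 1) v))).congr_deriv
      (by simp only [id]; ring)
  · have hrec := besselSeries_recurrence n v
    calc 0 < (a * (2 * n - a) - 4 * v) / 2 * besselSeries n v :=
          mul_pos (by linarith [hv.2]) (hS v hv)
      _ = _ := by linear_combination (-2 * v) * hrec

lemma besselSeries_pos {n : ℕ} {u : ℝ} (hu : u ∈ Ioc 0 ((n : ℝ) ^ 2 / 4)) :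
    0 < besselSeries n u := by
  by_contra! hle
  obtain ⟨c, hc, hSc, hS⟩ := exists_first_nonpos hu.1.le (continuous_besselSeries n).continuousOn
    (by rw [besselSeries_apply_zero]; positivity) hle
  have hn : (0 : ℝ) < n := Nat.cast_pos.mpr (Nat.pos_of_ne_zero fun h => by norm_num [h] at hu)
  refine (not_lt.mpr hSc) (pos_of_rpow_mul_deriv_pos (p := (n : ℝ) / 2)
    (f' := fun v => -besselSeries (n + 1) v)
    (by positivity) (continuous_besselSeries n).continuousOn
    (fun v _ => hasDerivAt_besselSeries n v) (fun v hv => ?_) ⟨hc.1, le_rfl⟩)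
  have := besselSeries_sub_pos (a := n) (b := c)
    (by linarith [hc.2, hu.2, show (n : ℝ) * (2 * n - n) = n ^ 2 by ring])
    (fun w hw => hS w ⟨hw.1.le, hw.2⟩) ⟨hv.1, hv.2.le⟩
  linarith

lemma besselSeries_succ_bounds {m : ℕ} {u : ℝ} (hu : u ∈ Ioc 0 ((m : ℝ) ^ 2 / 4)) :
    besselSeries m u < (m + 1) * besselSeries (m + 1) u ∧
      (m + 2) * besselSeries (m + 1) u < 2 * besselSeries m u := by
  have hsq : ∀ k : ℕ, m ≤ k → (m : ℝ) ^ 2 / 4 ≤ (k : ℝ) ^ 2 / 4 := fun k hk => by gcongr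
  have hS₂ : 0 < besselSeries (m + 2) u :=
    besselSeries_pos ⟨hu.1, hu.2.trans (hsq _ (by omega))⟩
  have hψ : 0 < m * besselSeries (m + 1) u - 2 * u * besselSeries (m + 2) u :=
    besselSeries_sub_pos (by push_cast; nlinarith [hu.2])
      (fun v hv => besselSeries_pos ⟨hv.1, hv.2.le.trans (hu.2.trans (hsq _ (by omega)))⟩)
      ⟨hu.1, le_rfl⟩
  have hrec := besselSeries_recurrence m u
  constructor
  · nlinarith [mul_pos hu.1 hS₂]
  · linarith

lemma besselJ_add_one_div_besselJ (n : ℕ) {t : ℝ} (ht : t ≠ 0) :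
    besselJ (n + 1) t / besselJ n t =
      t / 2 * besselSeries (n + 1) (t ^ 2 / 4) / besselSeries n (t ^ 2 / 4) := by
  rw [show (n : ℝ) + 1 = (n + 1 : ℕ) by push_cast; rfl, besselJ_natCast, besselJ_natCast, pow_succ,
    mul_assoc, mul_div_mul_left _ _ (pow_ne_zero n (div_ne_zero ht two_ne_zero))]

/-- For every integer `m ≥ 1` and `0 < x ≤ 1`:
`0 < xm/(2m+2) < J_{m+1}(mx)/J_m(mx) < xm/(m+2) < 1`. -/
theorem stmt6 (m : ℕ) (hm : 1 ≤ m) (x : ℝ) (hx0 : 0 < x) (hx1 : x ≤ 1) :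
    0 < x * (m:ℝ) / (2*(m:ℝ) + 2) ∧
    x * (m:ℝ) / (2*(m:ℝ) + 2) < besselJ ((m:ℝ)+1) ((m:ℝ)*x) / besselJ m ((m:ℝ)*x) ∧
    besselJ ((m:ℝ)+1) ((m:ℝ)*x) / besselJ m ((m:ℝ)*x) < x * (m:ℝ) / ((m:ℝ) + 2) ∧
    x * (m:ℝ) / ((m:ℝ) + 2) < 1 := by
  have hm0 : (0 : ℝ) < m := by exact_mod_cast hm
  have hu : ((m : ℝ) * x) ^ 2 / 4 ∈ Ioc 0 ((m : ℝ) ^ 2 / 4) :=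
    ⟨by positivity, by gcongr; nlinarith⟩
  obtain ⟨hlow, hup⟩ := besselSeries_succ_bounds hu
  have hA := besselSeries_pos hu
  rw [besselJ_add_one_div_besselJ m (by positivity)]
  refine ⟨by positivity, ?_, ?_, ?_⟩
  · rw [div_lt_div_iff₀ (by positivity) hA]
    nlinarith [mul_lt_mul_of_pos_left hlow (mul_pos hx0 hm0)]
  · rw [div_lt_div_iff₀ hA (by positivity)]
    nlinarith [mul_lt_mul_of_pos_left hup (mul_pos hx0 hm0)]
  · rw [div_lt_one (by positivity)]
    nlinarith
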